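/- arXiv:1409.0362 — 4 statements merged into one kernel-verified Lean document; each statement's English description precedes it below -/
import Mathlib

section
/- Let x, y, z ∈ (0,1) be distinct with x + y ≠ 1, y + z ≠ 1, x + z ≠ 1. Let P(t) = (cot(πt)² + 1, cot(πt)·(cot(πt)² + 1)). Then P(x), P(y), P(z) are collinear in ℝ² if and only if x + y + z ∈ {1, 2}. -/
open Real


lemma collinear_triple_iff (p q r : ℝ × ℝ) (hpq : p ≠ q) :
    Collinear ℝ ({p, q, r} : Set (ℝ × ℝ)) ↔
      (q.1 - p.1) * (r.2 - p.2) - (r.1 - p.1) * (q.2 - p.2) = 0 := by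
  rw [collinear_iff_of_mem (Set.mem_insert p _)]
  constructor
  · rintro ⟨v, hv⟩
    obtain ⟨cq, hcq⟩ := hv q (by simp)
    obtain ⟨cr, hcr⟩ := hv r (by simp)
    have hq1 : q.1 = cq * v.1 + p.1 := by rw [hcq]; rfl
    have hq2 : q.2 = cq * v.2 + p.2 := by rw [hcq]; rfl
    have hr1 : r.1 = cr * v.1 + p.1 := by rw [hcr]; rfl
    have hr2 : r.2 = cr * v.2 + p.2 := by rw [hcr]; rfl
    rw [hq1, hq2, hr1, hr2]; ring
  · intro hdet
    refine ⟨q - p, ?_⟩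
    intro s hs
    rcases hs with rfl | rfl | rfl
    · exact ⟨0, by simp⟩
    · exact ⟨1, by simp⟩
    · rcases eq_or_ne q.1 p.1 with h1 | h1
      · have h2 : q.2 ≠ p.2 := by
          intro h2; exact hpq (Prod.ext h1.symm h2.symm)
        refine ⟨(s.2 - p.2) / (q.2 - p.2), ?_⟩
        have hs1 : s.1 = p.1 := by
          have := hdet
          rw [h1] at this
          have h3 : (s.1 - p.1) * (q.2 - p.2) = 0 := by linarith [hdet]
          rcases mul_eq_zero.1 h3 with h | h
          · linarith
          · exact absurd (by linarith) h2
        apply Prod.ext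
        · show s.1 = _ * (q.1 - p.1) + p.1
          rw [h1, hs1]; ring
        · show s.2 = _ * (q.2 - p.2) + p.2
          rw [div_mul_cancel₀ _ (sub_ne_zero.2 h2)]; ring
      · refine ⟨(s.1 - p.1) / (q.1 - p.1), ?_⟩
        have h1' : q.1 - p.1 ≠ 0 := sub_ne_zero.2 h1
        apply Prod.ext
        · show s.1 = _ * (q.1 - p.1) + p.1
          field_simp; ring
        · show s.2 = _ * (q.2 - p.2) + p.2
          field_simp
          nlinarith [hdet]

lemma cot_identity (A B C : ℝ) (hA : Real.sin A ≠ 0) (hB : Real.sin B ≠ 0)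
    (hC : Real.sin C ≠ 0) :
    Real.cot A * Real.cot B + Real.cot A * Real.cot C + Real.cot B * Real.cot C - 1 =
      Real.sin (A + B + C) / (Real.sin A * Real.sin B * Real.sin C) := by
  rw [Real.cot_eq_cos_div_sin, Real.cot_eq_cos_div_sin, Real.cot_eq_cos_div_sin,
    Real.sin_add, Real.sin_add, Real.cos_add]
  field_simp
  ring

lemma cot_inj {x y : ℝ} (hx : x ∈ Set.Ioo (0:ℝ) 1) (hy : y ∈ Set.Ioo (0:ℝ) 1)
    (h : Real.cot (π * x) = Real.cot (π * y)) : x = y := by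
  have hsx : Real.sin (π * x) ≠ 0 :=
    ne_of_gt (Real.sin_pos_of_pos_of_lt_pi (by nlinarith [hx.1, Real.pi_pos])
      (by nlinarith [hx.2, Real.pi_pos]))
  have hsy : Real.sin (π * y) ≠ 0 :=
    ne_of_gt (Real.sin_pos_of_pos_of_lt_pi (by nlinarith [hy.1, Real.pi_pos])
      (by nlinarith [hy.2, Real.pi_pos]))
  rw [Real.cot_eq_cos_div_sin, Real.cot_eq_cos_div_sin, div_eq_div_iff hsx hsy] at h
  have hsin : Real.sin (π * y - π * x) = 0 := by
    rw [Real.sin_sub]; nlinarith [h]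
  obtain ⟨n, hn⟩ := Real.sin_eq_zero_iff.1 hsin
  have hpi := Real.pi_pos
  have : (n : ℝ) = y - x := by
    have : (n : ℝ) * π = π * (y - x) := by linarith [hn]
    nlinarith [this]
  have hb : |(n : ℝ)| < 1 := by
    rw [this, abs_lt]; constructor <;> nlinarith [hx.1, hx.2, hy.1, hy.2]
  have hn0 : n = 0 := by
    have h1 : |n| < 1 := by
      rw [← Int.cast_abs] at hb
      exact_mod_cast hb
    rcases abs_lt.mp h1 with ⟨h2, h3⟩
    omega
  rw [hn0] at this
  simp at this
  linarith

noncomputable def P (t : ℝ) : ℝ × ℝ :=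
  ((Real.cot (π * t)) ^ 2 + 1, Real.cot (π * t) * ((Real.cot (π * t)) ^ 2 + 1))

theorem collinear_iff_sum (x y z : ℝ)
    (hx : x ∈ Set.Ioo (0:ℝ) 1) (hy : y ∈ Set.Ioo (0:ℝ) 1) (hz : z ∈ Set.Ioo (0:ℝ) 1)
    (hxy : x ≠ y) (hyz : y ≠ z) (hxz : x ≠ z)
    (hxy1 : x + y ≠ 1) (hyz1 : y + z ≠ 1) (hxz1 : x + z ≠ 1) :
    Collinear ℝ ({P x, P y, P z} : Set (ℝ × ℝ)) ↔ (x + y + z = 1 ∨ x + y + z = 2) := by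
  have hpi := Real.pi_pos
  have hsx : Real.sin (π * x) ≠ 0 :=
    ne_of_gt (Real.sin_pos_of_pos_of_lt_pi (by nlinarith [hx.1]) (by nlinarith [hx.2]))
  have hsy : Real.sin (π * y) ≠ 0 :=
    ne_of_gt (Real.sin_pos_of_pos_of_lt_pi (by nlinarith [hy.1]) (by nlinarith [hy.2]))
  have hsz : Real.sin (π * z) ≠ 0 :=
    ne_of_gt (Real.sin_pos_of_pos_of_lt_pi (by nlinarith [hz.1]) (by nlinarith [hz.2]))
  set a := Real.cot (π * x) with ha
  set b := Real.cot (π * y) with hb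
  set c := Real.cot (π * z) with hc
  have hab : a ≠ b := fun h => hxy (cot_inj hx hy h)
  have hac : a ≠ c := fun h => hxz (cot_inj hx hz h)
  have hbc : b ≠ c := fun h => hyz (cot_inj hy hz h)
  have hkey : ∀ s t : ℝ, s * (s ^ 2 + 1) = t * (t ^ 2 + 1) → s = t := by
    intro s t h
    by_contra hne
    rcases lt_or_gt_of_ne hne with hlt | hlt <;>
      nlinarith [sq_nonneg (s + t), sq_nonneg s, sq_nonneg t]
  have hPxy : P x ≠ P y := by
    intro h
    exact hab (hkey a b (congrArg Prod.snd h))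
  rw [collinear_triple_iff _ _ _ hPxy]
  show (b ^ 2 + 1 - (a ^ 2 + 1)) * (c * (c ^ 2 + 1) - a * (a ^ 2 + 1)) -
      (c ^ 2 + 1 - (a ^ 2 + 1)) * (b * (b ^ 2 + 1) - a * (a ^ 2 + 1)) = 0 ↔ _
  have hfact : (b ^ 2 + 1 - (a ^ 2 + 1)) * (c * (c ^ 2 + 1) - a * (a ^ 2 + 1)) -
      (c ^ 2 + 1 - (a ^ 2 + 1)) * (b * (b ^ 2 + 1) - a * (a ^ 2 + 1)) =
      (b - a) * (c - a) * (c - b) * (a * b + a * c + b * c - 1) := by ring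
  rw [hfact]
  have hba : b - a ≠ 0 := sub_ne_zero.2 (Ne.symm hab)
  have hca : c - a ≠ 0 := sub_ne_zero.2 (Ne.symm hac)
  have hcb : c - b ≠ 0 := sub_ne_zero.2 (Ne.symm hbc)
  rw [mul_eq_zero, mul_eq_zero, mul_eq_zero]
  simp only [hba, hca, hcb, or_false, false_or]
  have hsum : a * b + a * c + b * c - 1 =
      Real.sin (π * (x + y + z)) / (Real.sin (π * x) * Real.sin (π * y) * Real.sin (π * z)) := by
    have := cot_identity (π * x) (π * y) (π * z) hsx hsy hsz
    rw [ha, hb, hc, this]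
    ring_nf
  rw [hsum, div_eq_zero_iff]
  have hprod : Real.sin (π * x) * Real.sin (π * y) * Real.sin (π * z) ≠ 0 :=
    mul_ne_zero (mul_ne_zero hsx hsy) hsz
  simp only [hprod, or_false]
  rw [Real.sin_eq_zero_iff]
  constructor
  · rintro ⟨n, hn⟩
    have hs : (n : ℝ) = x + y + z :=
      mul_left_cancel₀ (ne_of_gt hpi) (by linarith [hn])
    have h0 : (0 : ℝ) < (n : ℝ) := by rw [hs]; linarith [hx.1, hy.1, hz.1]
    have h3 : (n : ℝ) < 3 := by rw [hs]; linarith [hx.2, hy.2, hz.2]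
    have h0' : 0 < n := by exact_mod_cast h0
    have h3' : n < 3 := by exact_mod_cast h3
    interval_cases n
    · left; exact_mod_cast hs.symm
    · right; exact_mod_cast hs.symm
  · rintro (h | h)
    · exact ⟨1, by rw [h]; ring⟩
    · exact ⟨2, by rw [h]; ring⟩
end

section
/- Let G = ℝ/ℤ and let H_n = {i/n : 0 ≤ i < n} for n ≥ 2. Color elements of G by which of the intervals [0,1/3), [1/3,2/3), [2/3,1) their representative lies in. Then there is no triple (a, b, c) ∈ H_n³ with a + b + c = 0, all three the same color, and not all three equal, except triples where a = b = c ∈ {0, 1/3, 2/3}. -/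
noncomputable def rep (t : AddCircle (1 : ℝ)) : ℝ :=
  ((AddCircle.equivIco 1 0 t : Set.Ico (0:ℝ) (0 + 1)) : ℝ)

noncomputable def color (t : AddCircle (1 : ℝ)) : Fin 3 :=
  if rep t < 1/3 then 0 else if rep t < 2/3 then 1 else 2

/-!
Each colour class is a third `[k/3, (k+1)/3)` of `[0,1)`. If `a + b + c = 0` then
`rep a + rep b + rep c` is an integer `m`, and for a monochromatic triple of colour `k` it lies in
`[k, k+1)`, so `m = k`; as each summand is at least `k/3`, all three equal `k/3`.
-/

open Set

lemma rep_mem_Ico (t : AddCircle (1 : ℝ)) : rep t ∈ Ico (0 : ℝ) 1 := by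
  simpa [rep] using (AddCircle.equivIco 1 0 t).2

@[simp]
lemma coe_rep (t : AddCircle (1 : ℝ)) : ((rep t : ℝ) : AddCircle (1 : ℝ)) = t :=
  (AddCircle.equivIco 1 0).symm_apply_apply t

lemma rep_mem_Ico_color (t : AddCircle (1 : ℝ)) :
    rep t ∈ Ico (((color t : ℕ) : ℝ) / 3) (((color t : ℕ) + 1 : ℝ) / 3) := by
  obtain ⟨h0, h1⟩ := rep_mem_Ico t
  unfold color
  split_ifs with h₁ h₂ <;> constructor <;> norm_num <;> linarith

lemma exists_int_rep_add_rep_add_rep {a b c : AddCircle (1 : ℝ)} (hsum : a + b + c = 0) :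
    ∃ m : ℤ, rep a + rep b + rep c = m := by
  have h : ((rep a + rep b + rep c : ℝ) : AddCircle (1 : ℝ)) = 0 := by
    simpa only [AddCircle.coe_add, coe_rep] using hsum
  obtain ⟨m, hm⟩ := (AddCircle.coe_eq_zero_iff (1 : ℝ)).mp h
  exact ⟨m, by simpa using hm.symm⟩

lemma eq_of_mem_Ico_third_of_add_eq_int {k : ℕ} {m : ℤ} {x y z : ℝ}
    (hx : x ∈ Ico ((k : ℝ) / 3) ((k + 1) / 3)) (hy : y ∈ Ico ((k : ℝ) / 3) ((k + 1) / 3))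
    (hz : z ∈ Ico ((k : ℝ) / 3) ((k + 1) / 3)) (h : x + y + z = m) :
    x = k / 3 ∧ y = k / 3 ∧ z = k / 3 := by
  obtain ⟨hx₀, hx₁⟩ := hx
  obtain ⟨hy₀, hy₁⟩ := hy
  obtain ⟨hz₀, hz₁⟩ := hz
  have hmk : m = k := by
    have hlo : (k : ℝ) ≤ m := by linarith
    have hhi : (m : ℝ) < k + 1 := by linarith
    have : (k : ℤ) ≤ m := by exact_mod_cast hlo
    have : m < k + 1 := by exact_mod_cast hhi
    omega
  rw [hmk] at h
  push_cast at h
  refine ⟨?_, ?_, ?_⟩ <;> linarith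

theorem no_nontrivial_monochromatic_triple_general
    (a b c : AddCircle (1 : ℝ))
    (hsum : a + b + c = 0)
    (hcol : color a = color b ∧ color b = color c) :
    a = b ∧ b = c ∧
      (a = ((0 : ℝ) : AddCircle (1:ℝ)) ∨ a = (((1:ℝ)/3 : ℝ) : AddCircle (1:ℝ)) ∨
        a = (((2:ℝ)/3 : ℝ) : AddCircle (1:ℝ))) := by
  obtain ⟨hab, hbc⟩ := hcol
  obtain ⟨m, hm⟩ := exists_int_rep_add_rep_add_rep hsum
  have hb := rep_mem_Ico_color b
  have hc := rep_mem_Ico_color c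
  rw [← hab] at hb
  rw [← hbc, ← hab] at hc
  obtain ⟨ha', hb', hc'⟩ := eq_of_mem_Ico_third_of_add_eq_int (rep_mem_Ico_color a) hb hc hm
  rw [← coe_rep a, ← coe_rep b, ← coe_rep c, ha', hb', hc']
  refine ⟨rfl, rfl, ?_⟩
  have hk := (color a).isLt
  generalize (color a : ℕ) = k at hk ⊢
  interval_cases k <;> norm_num

theorem no_nontrivial_monochromatic_triple (n : ℕ) (hn : 2 ≤ n)
    (a b c : AddCircle (1 : ℝ))
    (ha : ∃ i < n, a = (((i : ℝ) / n : ℝ) : AddCircle (1:ℝ)))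
    (hb : ∃ i < n, b = (((i : ℝ) / n : ℝ) : AddCircle (1:ℝ)))
    (hc : ∃ i < n, c = (((i : ℝ) / n : ℝ) : AddCircle (1:ℝ)))
    (hsum : a + b + c = 0)
    (hcol : color a = color b ∧ color b = color c) :
    a = b ∧ b = c ∧
      (a = ((0 : ℝ) : AddCircle (1:ℝ)) ∨ a = (((1:ℝ)/3 : ℝ) : AddCircle (1:ℝ)) ∨
        a = (((2:ℝ)/3 : ℝ) : AddCircle (1:ℝ))) :=
  no_nontrivial_monochromatic_triple_general a b c hsum hcol
end

section
/- Suppose Γ is a set of points in the plane, no four of which are collinear, equipped with a bijection φ : ℝ/ℤ → Γ such that three distinct points φ(x), φ(y), φ(z) are collinear iff x + y + z = 0. Then for every n ≥ 2 the set S = φ({i/n : 0 ≤ i < n}) admits a 3-coloring in which no maximal collinear subset of S of size ≥ 2 is monochromatic. -/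
/-!
Colour `x ∈ ℝ/ℤ` by the third `[j/3, (j+1)/3)` of `[0, 1)` containing its representative. If
`x + y + z = 0` and all three have colour `j`, the representatives sum to an integer in
`[j, j + 1)`, hence to `j`, which forces all of them to equal `j/3`: a monochromatic zero-sum
triple is constant. Now let `φ x ≠ φ y` lie on a maximal collinear subset `L` of `S` and put
`z = -(x + y)`, which is again a multiple of `1/n`. If `z = x` or `z = y`, then `x` and `y` already
have different colours. Otherwise `φ z` is on the line through `φ x` and `φ y`, so maximality puts
it in `L`, and `x, y, z` do not all have the same colour.
-/

open Set

lemma eq_div_three_of_add_add_eq_intCast {j : ℕ} {m : ℤ} {a b c : ℝ}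
    (ha : a ∈ Ico (j / 3 : ℝ) ((j + 1) / 3)) (hb : b ∈ Ico (j / 3 : ℝ) ((j + 1) / 3))
    (hc : c ∈ Ico (j / 3 : ℝ) ((j + 1) / 3)) (hsum : a + b + c = m) : a = j / 3 := by
  obtain ⟨ha₁, ha₂⟩ := ha
  obtain ⟨hb₁, hb₂⟩ := hb
  obtain ⟨hc₁, hc₂⟩ := hc
  have hm : m = j := by
    have hjm : (j : ℤ) ≤ m := by exact_mod_cast (show (j : ℝ) ≤ m by linarith)
    have hmj : m < j + 1 := by exact_mod_cast (show (m : ℝ) < j + 1 by linarith)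
    omega
  rw [hm] at hsum
  push_cast at hsum
  linarith

noncomputable def thirdsColor (x : AddCircle (1 : ℝ)) : Fin 3 :=
  ⟨⌊3 * (AddCircle.equivIco 1 0 x : ℝ)⌋₊, by
    obtain ⟨h₀, h₁⟩ := (AddCircle.equivIco 1 0 x).2
    exact (Nat.floor_lt (by positivity)).2 (by norm_num at h₁ ⊢; linarith)⟩

lemma equivIco_mem_Ico_thirdsColor (x : AddCircle (1 : ℝ)) :
    (AddCircle.equivIco 1 0 x : ℝ) ∈
      Ico (((thirdsColor x : ℕ) : ℝ) / 3) ((((thirdsColor x : ℕ) : ℝ) + 1) / 3) := by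
  have h₀ : 0 ≤ 3 * (AddCircle.equivIco 1 0 x : ℝ) := by
    have := (AddCircle.equivIco 1 0 x).2.1
    positivity
  constructor
  · have := Nat.floor_le h₀
    simp only [thirdsColor]
    linarith
  · have := Nat.lt_floor_add_one (3 * (AddCircle.equivIco 1 0 x : ℝ))
    simp only [thirdsColor]
    linarith

lemma eq_of_add_add_eq_zero_of_thirdsColor_eq {x y z : AddCircle (1 : ℝ)} (hsum : x + y + z = 0)
    (hxy : thirdsColor x = thirdsColor y) (hxz : thirdsColor x = thirdsColor z) : x = y := by
  set a := (AddCircle.equivIco 1 0 x : ℝ)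
  set b := (AddCircle.equivIco 1 0 y : ℝ)
  set c := (AddCircle.equivIco 1 0 z : ℝ)
  obtain ⟨m, hm⟩ : ∃ m : ℤ, a + b + c = m := by
    have : ((a + b + c : ℝ) : AddCircle (1 : ℝ)) = 0 := by
      simp only [AddCircle.coe_add, a, b, c, AddCircle.coe_equivIco, hsum]
    obtain ⟨m, hm⟩ := (AddCircle.coe_eq_zero_iff _).1 this
    exact ⟨m, by simpa using hm.symm⟩
  have ha := equivIco_mem_Ico_thirdsColor x
  have hb := equivIco_mem_Ico_thirdsColor y
  have hc := equivIco_mem_Ico_thirdsColor z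
  rw [← hxy] at hb
  rw [← hxz] at hc
  rw [← AddCircle.coe_equivIco (a := 0) (y := x), ← AddCircle.coe_equivIco (a := 0) (y := y),
    eq_div_three_of_add_add_eq_intCast ha hb hc hm,
    eq_div_three_of_add_add_eq_intCast hb hc ha (by rw [← hm]; ring)]

lemma ZMod.coe_range_toAddCircle (n : ℕ) [NeZero n] :
    ((ZMod.toAddCircle : ZMod n →+ UnitAddCircle).range : Set UnitAddCircle) =
      {t : AddCircle (1 : ℝ) | ∃ i < n, t = (((i : ℝ) / n : ℝ) : AddCircle (1 : ℝ))} := by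
  ext t
  constructor
  · rintro ⟨j, rfl⟩
    exact ⟨j.val, j.val_lt, ZMod.toAddCircle_apply j⟩
  · rintro ⟨i, -, rfl⟩
    exact ⟨i, ZMod.toAddCircle_natCast i⟩

theorem exists_color_ne_of_maximal_collinear {k V P G C : Type*} [DivisionRing k]
    [AddCommGroup V] [Module k V] [AddTorsor V P] [AddCommGroup G] {φ : G → P}
    (hcol : ∀ x y z, x ≠ y → y ≠ z → x ≠ z → x + y + z = 0 → Collinear k {φ x, φ y, φ z})
    {col : G → C} (hcolor : ∀ x y z, x + y + z = 0 → col x = col y → col x = col z → x = y)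
    {S : AddSubgroup G} {L : Set P} (hLS : L ⊆ φ '' S) (hL : Collinear k L)
    (hmax : ∀ L', L ⊆ L' → L' ⊆ φ '' S → Collinear k L' → L' = L) (hL2 : 2 ≤ L.ncard) :
    ∃ x y, φ x ∈ L ∧ φ y ∈ L ∧ col x ≠ col y := by
  obtain ⟨p, q, hp, hq, hpq⟩ := (one_lt_ncard_iff (finite_of_ncard_ne_zero (by omega))).1 hL2
  obtain ⟨x, hxS, rfl⟩ := hLS hp
  obtain ⟨y, hyS, rfl⟩ := hLS hq
  have hxy : x ≠ y := by rintro rfl; exact hpq rfl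
  by_contra! hmono
  set z := -(x + y)
  have hsum : x + y + z = 0 := add_neg_cancel _
  have hzx : z ≠ x := fun h ↦ hxy (hcolor y x x (by rw [← hsum, h]; abel) (hmono y x hq hp)
    (hmono y x hq hp)).symm
  have hzy : z ≠ y := fun h ↦ hxy (hcolor x y y (h ▸ hsum) (hmono x y hp hq)
    (hmono x y hp hq))
  have hzL : φ z ∈ L := by
    have hcoll : Collinear k (insert (φ z) L) :=
      (hL.collinear_insert_iff_of_ne hp hq hpq).2 (hcol z x y hzx hxy hzy (by rw [← hsum]; abel))
    have hsub : insert (φ z) L ⊆ φ '' S :=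
      insert_subset ⟨z, S.neg_mem (S.add_mem hxS hyS), rfl⟩ hLS
    exact hmax _ (subset_insert _ _) hsub hcoll ▸ mem_insert _ _
  exact hxy (hcolor x y z hsum (hmono x y hp hq) (hmono x z hp hzL))

theorem abstract_counterexample_general
    (Γ : Set (ℝ × ℝ)) (φ : AddCircle (1 : ℝ) → ℝ × ℝ)
    (hbij : Set.BijOn φ Set.univ Γ)
    (hcol : ∀ x y z : AddCircle (1 : ℝ), x ≠ y → y ≠ z → x ≠ z →
      (Collinear ℝ ({φ x, φ y, φ z} : Set (ℝ × ℝ)) ↔ x + y + z = 0)) :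
    ∀ n : ℕ, 2 ≤ n →
      ∃ c : ℝ × ℝ → Fin 3,
        ∀ L : Set (ℝ × ℝ),
          L ⊆ φ '' {t : AddCircle (1:ℝ) | ∃ i < n, t = (((i : ℝ) / n : ℝ) : AddCircle (1:ℝ))} →
          Collinear ℝ L →
          (∀ L' : Set (ℝ × ℝ), L ⊆ L' →
            L' ⊆ φ '' {t : AddCircle (1:ℝ) | ∃ i < n, t = (((i : ℝ) / n : ℝ) : AddCircle (1:ℝ))} →
            Collinear ℝ L' → L' = L) →
          2 ≤ L.ncard →
          ∃ p ∈ L, ∃ q ∈ L, c p ≠ c q := by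
  intro n hn
  have : NeZero n := ⟨by omega⟩
  have hinj : φ.Injective := injOn_univ.1 hbij.injOn
  refine ⟨thirdsColor ∘ Function.invFun φ, fun L hLS hL hmax hL2 ↦ ?_⟩
  rw [← ZMod.coe_range_toAddCircle] at hLS hmax
  obtain ⟨x, y, hx, hy, hxy⟩ := exists_color_ne_of_maximal_collinear
    (fun x y z h₁ h₂ h₃ ↦ (hcol x y z h₁ h₂ h₃).2)
    (fun _ _ _ ↦ eq_of_add_add_eq_zero_of_thirdsColor_eq) hLS hL hmax hL2
  exact ⟨φ x, hx, φ y, hy, by simpa [Function.leftInverse_invFun hinj _] using hxy⟩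

theorem abstract_counterexample
    (Γ : Set (ℝ × ℝ)) (φ : AddCircle (1 : ℝ) → ℝ × ℝ)
    (hbij : Set.BijOn φ Set.univ Γ)
    (hfour : ∀ p q r s : ℝ × ℝ, p ∈ Γ → q ∈ Γ → r ∈ Γ → s ∈ Γ →
      p ≠ q → p ≠ r → p ≠ s → q ≠ r → q ≠ s → r ≠ s →
      ¬ Collinear ℝ ({p, q, r, s} : Set (ℝ × ℝ)))
    (hcol : ∀ x y z : AddCircle (1 : ℝ), x ≠ y → y ≠ z → x ≠ z →
      (Collinear ℝ ({φ x, φ y, φ z} : Set (ℝ × ℝ)) ↔ x + y + z = 0)) :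
    ∀ n : ℕ, 2 ≤ n →
      ∃ c : ℝ × ℝ → Fin 3,
        ∀ L : Set (ℝ × ℝ),
          L ⊆ φ '' {t : AddCircle (1:ℝ) | ∃ i < n, t = (((i : ℝ) / n : ℝ) : AddCircle (1:ℝ))} →
          Collinear ℝ L →
          (∀ L' : Set (ℝ × ℝ), L ⊆ L' →
            L' ⊆ φ '' {t : AddCircle (1:ℝ) | ∃ i < n, t = (((i : ℝ) / n : ℝ) : AddCircle (1:ℝ))} →
            Collinear ℝ L' → L' = L) →
          2 ≤ L.ncard →
          ∃ p ∈ L, ∃ q ∈ L, c p ≠ c q :=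
  abstract_counterexample_general Γ φ hbij hcol
end

section
/- Let P(t) = (cot(πt)² + 1, cot(πt)·(cot(πt)² + 1)) for t ∈ (0,1). If x, y, z, w ∈ (0,1) are distinct and P(x), P(y), P(z), P(w) all lie on a common line in ℝ², then a contradiction follows; i.e., no four of the points {P(t) : t ∈ (0,1)} are collinear. -/
/-!
Writing `c = cot (π t)`, the point `P t` is `(c² + 1, c (c² + 1))`, so `P t` lies on a line
`a X + b Y = d` with `(a, b) ≠ 0` exactly when `c` is a root of the nonzero polynomial
`b c³ + a c² + b c + (a - d)` of degree at most three. Since `t ↦ cot (π t)` is injective on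
`(0, 1)`, four distinct parameters would give four distinct roots.
-/

open Real

open Polynomial

lemma Real.cot_eq_tan_pi_div_two_sub (x : ℝ) : cot x = tan (π / 2 - x) := by
  rw [tan_pi_div_two_sub, ← cot_inv_eq_tan, inv_inv]

lemma Real.injOn_cot_pi_mul : Set.InjOn (fun t ↦ cot (π * t)) (Set.Ioo 0 1) := by
  intro s hs t ht hst
  have hmem : ∀ u ∈ Set.Ioo (0 : ℝ) 1, π / 2 - π * u ∈ Set.Ioo (-(π / 2)) (π / 2) := by
    rintro u ⟨hu0, hu1⟩
    constructor <;> nlinarith [pi_pos]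
  have := injOn_tan (hmem s hs) (hmem t ht) <| by
    simpa only [cot_eq_tan_pi_div_two_sub] using hst
  nlinarith [pi_pos]

lemma exists_forall_mem_eq_of_collinear {s : Set (ℝ × ℝ)} (h : Collinear ℝ s) :
    ∃ a b d : ℝ, (a, b) ≠ 0 ∧ ∀ p ∈ s, a * p.1 + b * p.2 = d := by
  obtain ⟨p₀, ⟨v₁, v₂⟩, hv⟩ := (collinear_iff_exists_forall_eq_smul_vadd s).1 h
  -- the normal `(-v₂, v₁)` of the direction `v`, or `(1, 0)` if `v = 0`
  by_cases hv0 : (v₁, v₂) = 0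
  · refine ⟨1, 0, p₀.1, by simp, fun p hp ↦ ?_⟩
    obtain ⟨r, rfl⟩ := hv p hp
    simp [hv0]
  · refine ⟨-v₂, v₁, -v₂ * p₀.1 + v₁ * p₀.2, fun h0 ↦ hv0 ?_, fun p hp ↦ ?_⟩
    · simp_all
    · obtain ⟨r, rfl⟩ := hv p hp
      simp only [vadd_eq_add, Prod.fst_add, Prod.snd_add, Prod.smul_mk, smul_eq_mul]
      ring

lemma card_le_three_of_forall_mem_eq {a b d : ℝ} (hab : (a, b) ≠ 0) {Z : Finset ℝ}
    (hZ : ∀ c ∈ Z, a * (c ^ 2 + 1) + b * (c * (c ^ 2 + 1)) = d) : Z.card ≤ 3 := by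
  set p : ℝ[X] := C b * X ^ 3 + C a * X ^ 2 + C b * X + C (a - d)
  have hp0 : p ≠ 0 := by
    intro hp
    have h2 : p.coeff 2 = a := by simp [p]
    have h3 : p.coeff 3 = b := by simp [p]
    simp_all
  calc Z.card ≤ p.natDegree := card_le_degree_of_subset_roots fun c hc ↦ by
        rw [mem_roots hp0, IsRoot.def]
        simp only [p, eval_add, eval_mul, eval_C, eval_pow, eval_X]
        linear_combination hZ c hc
    _ ≤ 3 := by simp only [p]; compute_degree

theorem no_four_param_points_collinear (x y z w : ℝ)
    (hx : x ∈ Set.Ioo (0:ℝ) 1) (hy : y ∈ Set.Ioo (0:ℝ) 1)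
    (hz : z ∈ Set.Ioo (0:ℝ) 1) (hw : w ∈ Set.Ioo (0:ℝ) 1)
    (hxy : x ≠ y) (hxz : x ≠ z) (hxw : x ≠ w)
    (hyz : y ≠ z) (hyw : y ≠ w) (hzw : z ≠ w)
    (h : Collinear ℝ ({P x, P y, P z, P w} : Set (ℝ × ℝ))) :
    False := by
  obtain ⟨a, b, d, hab, hline⟩ := exists_forall_mem_eq_of_collinear h
  set T : Finset ℝ := {x, y, z, w}
  have hT : (T : Set ℝ) ⊆ Set.Ioo 0 1 := by simp [T, Set.insert_subset_iff, *]
  have hcard : (T.image fun t ↦ cot (π * t)).card = 4 := by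
    rw [Finset.card_image_of_injOn (injOn_cot_pi_mul.mono hT)]
    simp [T, *]
  have hZ : ∀ c ∈ T.image fun t ↦ cot (π * t), a * (c ^ 2 + 1) + b * (c * (c ^ 2 + 1)) = d := by
    simp only [Finset.mem_image]
    rintro _ ⟨t, ht, rfl⟩
    refine hline (P t) ?_
    simp only [T, Finset.mem_insert, Finset.mem_singleton] at ht
    rcases ht with rfl | rfl | rfl | rfl <;> simp
  have := card_le_three_of_forall_mem_eq hab hZ
  omega
end
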